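/- arXiv:0812.2379 — 2 statements merged into one kernel-verified Lean document; each statement's English description precedes it below -/
import Mathlib

section
/- The subspace-metric intersection numbers satisfy N_S(a,b,w)·J_S(u,s,w;a,b,c) = N_S(a,c,u)·J_S(w,s,u;a,c,b). -/
/-!
For a fixed subspace `A`, the group of automorphisms of `V` stabilising `A` acts transitively
on the subspaces `B` of given dimension and given `dim (A ⊓ B)`: splitting `A = (A ⊓ B) ⊕ A₁` and
`B = (A ⊓ B) ⊕ B₁`, the three summands form an independent family, and any two independent
families with the same dimensions are moved onto each other by an automorphism. Since
`d_S(A, B)` and `dim B` determine `dim (A ⊓ B)`, the fibre count `J_S` does not depend on the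
choice of `B`, and both sides of the identity count the pairs `(B', C')` with
`d_S(A, B') = w`, `d_S(A, C') = u` and `d_S(B', C') = s`.
-/

/-- The subspace distance `d_S(U,V) = dim(U+V) - dim(U∩V)`. -/
noncomputable def dS {F : Type} [Field F] {n : ℕ} (U V : Submodule F (Fin n → F)) : ℕ :=
  Module.finrank F ↥(U ⊔ V) - Module.finrank F ↥(U ⊓ V)

open Module Submodule

theorem exists_iSupIndep_inf_sup_eq {α : Type*} [CompleteLattice α] [IsModularLattice α]
    [ComplementedLattice α] (a b : α) :
    ∃ a₁ b₁ : α, iSupIndep ![a ⊓ b, a₁, b₁] ∧ a ⊓ b ⊔ a₁ = a ∧ a ⊓ b ⊔ b₁ = b := by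
  obtain ⟨a₁, ha₁, ha⟩ := IsModularLattice.exists_disjoint_and_sup_eq (inf_le_left : a ⊓ b ≤ a)
  obtain ⟨b₁, hb₁, hb⟩ := IsModularLattice.exists_disjoint_and_sup_eq (inf_le_right : a ⊓ b ≤ b)
  have ha₁b : Disjoint a₁ b := by
    rw [disjoint_iff, ← inf_eq_left.mpr (ha ▸ le_sup_right : a₁ ≤ a), inf_assoc]
    exact ha₁.symm.eq_bot
  have hab₁ : Disjoint a b₁ := by
    rw [disjoint_iff, ← inf_eq_left.mpr (hb ▸ le_sup_right : b₁ ≤ b), inf_comm, inf_assoc,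
      inf_comm b]
    exact hb₁.symm.eq_bot
  refine ⟨a₁, b₁, iSupIndep_fin_three.mpr ⟨?_, ?_, ?_⟩, ha, hb⟩
  · simpa using ha₁.disjoint_sup_right_of_disjoint_sup_left (by rwa [ha])
  · simpa [sup_comm b₁, hb] using ha₁b
  · simpa [ha] using hab₁.symm

section LinearEquiv

variable {K V M : Type*} [DivisionRing K] [AddCommGroup V] [Module K V] [FiniteDimensional K V]
  [AddCommGroup M] [Module K M]

theorem exists_linearEquiv_comp_eq_of_injective {φ ψ : M →ₗ[K] V}
    (hφ : Function.Injective φ) (hψ : Function.Injective ψ) :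
    ∃ g : V ≃ₗ[K] V, g.toLinearMap ∘ₗ φ = ψ := by
  obtain ⟨C, hC⟩ := (LinearMap.range φ).exists_isCompl
  obtain ⟨C', hC'⟩ := (LinearMap.range ψ).exists_isCompl
  let e : LinearMap.range φ ≃ₗ[K] LinearMap.range ψ :=
    (LinearEquiv.ofInjective φ hφ).symm.trans (LinearEquiv.ofInjective ψ hψ)
  have hCC' : finrank K C = finrank K C' := by
    have := finrank_add_eq_of_isCompl hC
    have := finrank_add_eq_of_isCompl hC'
    have := e.finrank_eq
    omega
  -- glue `range φ ≃ range ψ` with an arbitrary isomorphism between complements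
  refine ⟨(prodEquivOfIsCompl _ _ hC).symm ≪≫ₗ (e.prodCongr (.ofFinrankEq C C' hCC')) ≪≫ₗ
    prodEquivOfIsCompl _ _ hC', LinearMap.ext fun m => ?_⟩
  have hm : (prodEquivOfIsCompl _ _ hC).symm (φ m) = (LinearEquiv.ofInjective φ hφ m, 0) :=
    prodEquivOfIsCompl_symm_apply_left _ _ hC (LinearEquiv.ofInjective φ hφ m)
  simp only [LinearMap.coe_comp, LinearEquiv.coe_coe, Function.comp_apply,
    LinearEquiv.trans_apply, hm]
  simp [e]

theorem iSupIndep.exists_linearEquiv_map_eq {ι : Type*} {p p' : ι → Submodule K V}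
    (hp : iSupIndep p) (hp' : iSupIndep p') (h : ∀ i, finrank K (p i) = finrank K (p' i)) :
    ∃ g : V ≃ₗ[K] V, ∀ i, (p i).map (g : V →ₗ[K] V) = p' i := by
  classical
  let e i : p i ≃ₗ[K] p' i := .ofFinrankEq _ _ (h i)
  let φ := DFinsupp.lsum ℕ fun i => (p i).subtype
  let ψ :=
    (DFinsupp.lsum ℕ fun i => (p' i).subtype) ∘ₗ (DFinsupp.mapRange.linearEquiv e).toLinearMap
  have hφ : Function.Injective φ := (iSupIndep_iff_dfinsupp_lsum_injective p).mp hp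
  have hψ : Function.Injective ψ :=
    ((iSupIndep_iff_dfinsupp_lsum_injective p').mp hp').comp (LinearEquiv.injective _)
  obtain ⟨g, hg⟩ := exists_linearEquiv_comp_eq_of_injective hφ hψ
  refine ⟨g, fun i => ?_⟩
  have hφi : φ ∘ₗ DFinsupp.lsingle i = (p i).subtype := by ext; simp [φ]
  have hψi : ψ ∘ₗ DFinsupp.lsingle i = (p' i).subtype ∘ₗ (e i).toLinearMap := by ext; simp [ψ]
  calc (p i).map (g : V →ₗ[K] V)
      = LinearMap.range ((g.toLinearMap ∘ₗ φ) ∘ₗ DFinsupp.lsingle i) := by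
        rw [LinearMap.comp_assoc, hφi, LinearMap.range_comp, range_subtype]
    _ = p' i := by
        rw [hg, hψi, LinearMap.range_comp, LinearEquiv.range, Submodule.map_top, range_subtype]

theorem Submodule.finrank_sup_of_disjoint {s t : Submodule K V} (h : Disjoint s t) :
    finrank K ↥(s ⊔ t) = finrank K s + finrank K t := by
  have := finrank_sup_add_finrank_inf_eq s t
  rwa [h.eq_bot, finrank_bot, add_zero] at this

theorem Submodule.exists_linearEquiv_map_eq_map_eq {A B B' : Submodule K V}
    (hB : finrank K B = finrank K B') (hAB : finrank K ↥(A ⊓ B) = finrank K ↥(A ⊓ B')) :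
    ∃ g : V ≃ₗ[K] V, A.map (g : V →ₗ[K] V) = A ∧ B.map (g : V →ₗ[K] V) = B' := by
  obtain ⟨A₁, B₁, hind, hA, hB₁⟩ := exists_iSupIndep_inf_sup_eq A B
  obtain ⟨A₁', B₁', hind', hA', hB₁'⟩ := exists_iSupIndep_inf_sup_eq A B'
  have hrank : ∀ {B A₁ B₁ : Submodule K V}, iSupIndep ![A ⊓ B, A₁, B₁] → A ⊓ B ⊔ A₁ = A →
      A ⊓ B ⊔ B₁ = B → finrank K ↥(A ⊓ B) + finrank K A₁ = finrank K A ∧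
        finrank K ↥(A ⊓ B) + finrank K B₁ = finrank K B := by
    intro B A₁ B₁ hind hA hB
    have hdA : Disjoint (A ⊓ B) A₁ := hind.pairwiseDisjoint (by decide : (0 : Fin 3) ≠ 1)
    have hdB : Disjoint (A ⊓ B) B₁ := hind.pairwiseDisjoint (by decide : (0 : Fin 3) ≠ 2)
    exact ⟨by rw [← finrank_sup_of_disjoint hdA, hA], by rw [← finrank_sup_of_disjoint hdB, hB]⟩
  have hr := hrank hind hA hB₁
  have hr' := hrank hind' hA' hB₁'
  obtain ⟨g, hg⟩ := hind.exists_linearEquiv_map_eq hind' fun i => by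
    fin_cases i
    exacts [hAB, (by omega : finrank K A₁ = finrank K A₁'),
      (by omega : finrank K B₁ = finrank K B₁')]
  have hg0 : (A ⊓ B).map (g : V →ₗ[K] V) = A ⊓ B' := hg 0
  have hg1 : A₁.map (g : V →ₗ[K] V) = A₁' := hg 1
  have hg2 : B₁.map (g : V →ₗ[K] V) = B₁' := hg 2
  refine ⟨g, ?_, ?_⟩
  · conv_lhs => rw [← hA]
    rw [map_sup, hg0, hg1, hA']
  · rw [← hB₁, map_sup, hg0, hg2, hB₁']

section SubspaceDistance

variable {F : Type} [Field F] {n : ℕ}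

theorem dS_comm (U W : Submodule F (Fin n → F)) : dS U W = dS W U := by
  rw [dS, dS, sup_comm, inf_comm]

theorem dS_map_linearEquiv (g : (Fin n → F) ≃ₗ[F] (Fin n → F)) (U W : Submodule F (Fin n → F)) :
    dS (U.map (g : (Fin n → F) →ₗ[F] (Fin n → F))) (W.map (g : (Fin n → F) →ₗ[F] (Fin n → F))) =
      dS U W := by
  rw [dS, dS, ← Submodule.map_sup, ← map_inf _ g.injective, LinearEquiv.finrank_map_eq,
    LinearEquiv.finrank_map_eq]

theorem finrank_inf_eq_of_dS_eq {A B B' : Submodule F (Fin n → F)}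
    (hB : finrank F B = finrank F B') (hAB : dS A B = dS A B') :
    finrank F ↥(A ⊓ B) = finrank F ↥(A ⊓ B') := by
  have := finrank_sup_add_finrank_inf_eq A B
  have := finrank_sup_add_finrank_inf_eq A B'
  have := finrank_mono (inf_le_sup : A ⊓ B ≤ A ⊔ B)
  have := finrank_mono (inf_le_sup : A ⊓ B' ≤ A ⊔ B')
  rw [dS, dS] at hAB
  omega

theorem nonempty_equiv_of_dS_eq {A B B' : Submodule F (Fin n → F)}
    (hB : finrank F B = finrank F B') (hAB : dS A B = dS A B') (c u s : ℕ) :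
    Nonempty ({X : Submodule F (Fin n → F) // finrank F X = c ∧ dS A X = u ∧ dS B X = s} ≃
      {X : Submodule F (Fin n → F) // finrank F X = c ∧ dS A X = u ∧ dS B' X = s}) := by
  obtain ⟨g, hgA, hgB⟩ := exists_linearEquiv_map_eq_map_eq hB (finrank_inf_eq_of_dS_eq hB hAB)
  refine ⟨(orderIsoMapComap g).toEquiv.subtypeEquiv fun X => ?_⟩
  have hA : dS A (X.map (g : (Fin n → F) →ₗ[F] (Fin n → F))) = dS A X := by
    conv_lhs => rw [← hgA]
    exact dS_map_linearEquiv g A X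
  have hX : finrank F ↥(orderIsoMapComap g X) = finrank F X := LinearEquiv.finrank_map_eq g X
  simp only [RelIso.coe_fn_toEquiv, hX, orderIsoMapComap_apply, hA, ← hgB, dS_map_linearEquiv]

end SubspaceDistance

theorem Nat.card_subtype_prod_eq_mul {α β : Type*} {P : α → Prop} {R : α → β → Prop} (a₀ : α)
    (hR : ∀ a, P a → Nonempty ({b // R a b} ≃ {b // R a₀ b})) :
    Nat.card {x : α × β // P x.1 ∧ R x.1 x.2} = Nat.card {a // P a} * Nat.card {b // R a₀ b} := by
  let e : {x : α × β // P x.1 ∧ R x.1 x.2} ≃ Σ a : {a // P a}, {b // R a b} :=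
    { toFun x := ⟨⟨x.1.1, x.2.1⟩, ⟨x.1.2, x.2.2⟩⟩
      invFun y := ⟨(y.1.1, y.2.1), y.1.2, y.2.2⟩
      left_inv _ := rfl
      right_inv _ := rfl }
  rw [← Nat.card_prod]
  exact Nat.card_congr <| e.trans <|
    (Equiv.sigmaCongrRight fun a : {a // P a} => (hR a.1 a.2).some).trans
      (Equiv.sigmaEquivProd _ _)

theorem stmt13_general (F : Type) [Field F] (n b c u s w : ℕ)
    (A B C : Submodule F (Fin n → F))
    (hB : Module.finrank F ↥B = b)
    (hC : Module.finrank F ↥C = c) (hAB : dS A B = w) (hAC : dS A C = u) :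
    -- N_S(a,b,w) * J_S(u,s,w;a,b,c) = N_S(a,c,u) * J_S(w,s,u;a,c,b)
    Nat.card {B' : Submodule F (Fin n → F) //
          Module.finrank F ↥B' = b ∧ dS A B' = w} *
        Nat.card {X : Submodule F (Fin n → F) //
          Module.finrank F ↥X = c ∧ dS A X = u ∧ dS B X = s} =
      Nat.card {C' : Submodule F (Fin n → F) //
          Module.finrank F ↥C' = c ∧ dS A C' = u} *
        Nat.card {Y : Submodule F (Fin n → F) //
          Module.finrank F ↥Y = b ∧ dS A Y = w ∧ dS C Y = s} := by
  rw [← Nat.card_subtype_prod_eq_mul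
      (R := fun Y X : Submodule F (Fin n → F) => finrank F X = c ∧ dS A X = u ∧ dS Y X = s) B
      fun Y hY => nonempty_equiv_of_dS_eq (hY.1.trans hB.symm) (hY.2.trans hAB.symm) c u s,
    ← Nat.card_subtype_prod_eq_mul
      (R := fun Z Y : Submodule F (Fin n → F) => finrank F Y = b ∧ dS A Y = w ∧ dS Z Y = s) C
      fun Z hZ => nonempty_equiv_of_dS_eq (hZ.1.trans hC.symm) (hZ.2.trans hAC.symm) b w s]
  exact Nat.card_congr <| (Equiv.prodComm _ _).subtypeEquiv fun x => by
    rw [Equiv.prodComm_apply, Prod.fst_swap, Prod.snd_swap, dS_comm x.1]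
    tauto

theorem stmt13 (F : Type) [Field F] [Fintype F] (n a b c u s w : ℕ)
    (A B C : Submodule F (Fin n → F))
    (hA : Module.finrank F ↥A = a) (hB : Module.finrank F ↥B = b)
    (hC : Module.finrank F ↥C = c) (hAB : dS A B = w) (hAC : dS A C = u) :
    -- N_S(a,b,w) * J_S(u,s,w;a,b,c) = N_S(a,c,u) * J_S(w,s,u;a,c,b)
    Nat.card {B' : Submodule F (Fin n → F) //
          Module.finrank F ↥B' = b ∧ dS A B' = w} *
        Nat.card {X : Submodule F (Fin n → F) //
          Module.finrank F ↥X = c ∧ dS A X = u ∧ dS B X = s} =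
      Nat.card {C' : Submodule F (Fin n → F) //
          Module.finrank F ↥C' = c ∧ dS A C' = u} *
        Nat.card {Y : Submodule F (Fin n → F) //
          Module.finrank F ↥Y = b ∧ dS A Y = w ∧ dS C Y = s} :=
  stmt13_general F n b c u s w A B C hB hC hAB hAC
end LinearEquiv
end

section
/- When u ≤ min{a+c, a+2b−c}, s ≤ min{b+c, 2a+b−c}, and u+s ≤ min{a+b, n}, the intersection number J_S(u,s,u+s;a,b,c) equals [((a−b+u+s)/2) choose ((c−b+s)/2)]_q · [((b−a+u+s)/2) choose ((c−a+u)/2)]_q; if any of the three conditions fails, J_S(u,s,u+s;a,b,c) = 0. -/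
/-- `galpha q m u = ∏_{i=0}^{u-1} (q^m - q^i)`. -/
def galpha (q m u : ℕ) : ℕ := ∏ i ∈ Finset.range u, (q ^ m - q ^ i)

/-- The Gaussian binomial coefficient `[n choose r]_q = α(n,r)/α(r,r)`. -/
def gauss (q n r : ℕ) : ℕ := galpha q n r / galpha q r r

/-- Gaussian binomial with rational arguments, interpreted as `0` unless the
arguments are nonnegative integers `x ≥ y`. -/
def gaussQ (q : ℕ) (x y : ℚ) : ℕ :=
  if 0 ≤ x ∧ 0 ≤ y ∧ y ≤ x ∧ x.den = 1 ∧ y.den = 1 then gauss q x.num.toNat y.num.toNat else 0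

/-!
Writing `x = dim (A ⊓ C)` and `y = dim (B ⊓ C)`, the identity
`dim (U ⊔ W) + dim (U ⊓ W) = dim U + dim W` turns the distance conditions into linear
equations, and the triangle equality becomes `x + y = dim C + dim (A ⊓ B)`. Since
`A ⊓ C ⊔ B ⊓ C ≤ C` and `A ⊓ C ⊓ (B ⊓ C) ≤ A ⊓ B`, this forces `C = A ⊓ C ⊔ B ⊓ C` and
`A ⊓ B ≤ C`. Hence `C ↦ (A ⊓ C, B ⊓ C)` is a bijection onto pairs `X ∈ [A ⊓ B, A]`,
`Y ∈ [A ⊓ B, B]` of dimensions `x`, `y`, with inverse `(X, Y) ↦ X ⊔ Y` by modularity. An interval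
`[I, A]` is the subspace lattice of `A ⧸ I`, and subspaces of a given dimension are counted by the
Gaussian binomial, by double counting independent tuples. The resulting count needs none of the
three conditions: when no such `C` exists, one of the Gaussian factors vanishes by the convention
on non-integral or negative arguments, and the conditions are necessary for any `C` to exist.
-/

open Module Submodule

lemma galpha_eq_zero_of_lt (q : ℕ) {m r : ℕ} (h : m < r) : galpha q m r = 0 :=
  Finset.prod_eq_zero (Finset.mem_range.2 h) (Nat.sub_self _)

lemma galpha_pos {q : ℕ} (hq : 1 < q) {m r : ℕ} (h : r ≤ m) : 0 < galpha q m r :=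
  Finset.prod_pos fun _ hi =>
    Nat.sub_pos_of_lt (Nat.pow_lt_pow_right hq ((Finset.mem_range.1 hi).trans_le h))

lemma gauss_eq_zero_of_lt (q : ℕ) {m r : ℕ} (h : m < r) : gauss q m r = 0 := by
  rw [gauss, galpha_eq_zero_of_lt q h, Nat.zero_div]

lemma gaussQ_natCast (q m r : ℕ) : gaussQ q m r = gauss q m r := by
  rcases le_or_gt r m with h | h
  · rw [gaussQ, if_pos ⟨by positivity, by positivity, by exact_mod_cast h, by simp, by simp⟩]
    simp
  · rw [gaussQ, if_neg, gauss_eq_zero_of_lt q h]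
    rintro ⟨-, -, hle, -, -⟩
    exact absurd (by exact_mod_cast hle) h.not_ge

lemma exists_eq_natCast_of_gaussQ_ne_zero {q : ℕ} {x y : ℚ} (h : gaussQ q x y ≠ 0) :
    ∃ k : ℕ, y = k := by
  obtain ⟨hy, hden⟩ : 0 ≤ y ∧ y.den = 1 := by
    by_contra hc
    exact h (if_neg (by tauto))
  refine ⟨y.num.toNat, ?_⟩
  rw [← Int.cast_natCast, Int.toNat_of_nonneg (Rat.num_nonneg.2 hy),
    Rat.coe_int_num_of_den_eq_one hden]

section Counting

variable {F V : Type*} [Field F] [AddCommGroup V] [Module F V]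

def spanFiberEquiv [FiniteDimensional F V] {r : ℕ} (W : Submodule F V) (hW : finrank F W = r) :
    {s : {s : Fin r → V // LinearIndependent F s} // span F (Set.range s.1) = W} ≃
      {t : Fin r → W // LinearIndependent F t} where
  toFun s := ⟨fun i => ⟨s.1.1 i, s.2.le (subset_span ⟨i, rfl⟩)⟩,
    (W.subtype.linearIndependent_iff (ker_subtype W)).1 s.1.2⟩
  invFun t := ⟨⟨W.subtype ∘ t.1, t.2.map' W.subtype (ker_subtype W)⟩, by
    have htop : span F (Set.range t.1) = ⊤ :=
      t.2.span_eq_top_of_card_eq_finrank' (by simp [hW])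
    rw [Set.range_comp, ← map_span, htop, Submodule.map_top, range_subtype]⟩
  left_inv _ := rfl
  right_inv _ := rfl

variable [Fintype F] [Finite V]

lemma card_linearIndependent_eq_galpha {k : ℕ} (hk : k ≤ finrank F V) :
    Nat.card {s : Fin k → V // LinearIndependent F s} =
      galpha (Fintype.card F) (finrank F V) k := by
  rw [card_linearIndependent hk, galpha, Finset.prod_range]

lemma card_linearIndependent_eq_mul (r : ℕ) :
    Nat.card {s : Fin r → V // LinearIndependent F s} =
      Nat.card {W : Submodule F V // finrank F W = r} * galpha (Fintype.card F) r r := by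
  have : Fintype {W : Submodule F V // finrank F W = r} := Fintype.ofFinite _
  let f : {s : Fin r → V // LinearIndependent F s} → {W : Submodule F V // finrank F W = r} :=
    fun s => ⟨span F (Set.range s.1), by rw [finrank_span_eq_card s.2, Fintype.card_fin]⟩
  have hfiber (W : {W : Submodule F V // finrank F W = r}) :
      Nat.card {s // f s = W} = galpha (Fintype.card F) r r := by
    rw [Nat.card_congr ((Equiv.subtypeEquivRight fun s => Subtype.ext_iff).trans
      (spanFiberEquiv W.1 W.2)), card_linearIndependent_eq_galpha W.2.ge, W.2]
  rw [← Nat.card_congr (Equiv.sigmaFiberEquiv f), Nat.card_sigma,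
    Finset.sum_congr rfl fun W _ => hfiber W, Finset.sum_const, smul_eq_mul,
    Finset.card_univ, Nat.card_eq_fintype_card]

lemma card_finrank_eq (r : ℕ) :
    Nat.card {W : Submodule F V // finrank F W = r} =
      gauss (Fintype.card F) (finrank F V) r := by
  rcases le_or_gt r (finrank F V) with hr | hr
  · rw [gauss, ← card_linearIndependent_eq_galpha hr, card_linearIndependent_eq_mul,
      Nat.mul_div_cancel _ (galpha_pos Fintype.one_lt_card le_rfl)]
  · rw [gauss_eq_zero_of_lt _ hr, Nat.card_eq_zero]
    exact Or.inl ⟨fun W => hr.not_ge (W.2 ▸ finrank_le W.1)⟩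

end Counting

section Intervals

variable {F V : Type*} [Field F] [AddCommGroup V] [Module F V] [FiniteDimensional F V]

lemma finrank_map_mkQ_add_finrank {J Y : Submodule F V} (h : J ≤ Y) :
    finrank F (Y.map J.mkQ) + finrank F J = finrank F Y := by
  have hrange : LinearMap.range (J.mkQ ∘ₗ Y.subtype) = Y.map J.mkQ := by
    rw [LinearMap.range_comp, range_subtype]
  have hker : LinearMap.ker (J.mkQ ∘ₗ Y.subtype) = J.comap Y.subtype := by
    rw [LinearMap.ker_comp, ker_mkQ]
  rw [← hrange, ← (comapSubtypeEquivOfLe h).finrank_eq, ← hker,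
    LinearMap.finrank_range_add_finrank_ker]

def equivQuotientOfLe (J : Submodule F V) (k : ℕ) :
    {X : Submodule F V // J ≤ X ∧ finrank F X = finrank F J + k} ≃
      {Z : Submodule F (V ⧸ J) // finrank F Z = k} where
  toFun X := ⟨X.1.map J.mkQ, by have := finrank_map_mkQ_add_finrank X.2.1; omega⟩
  invFun Z := ⟨Z.1.comap J.mkQ, le_comap_mkQ J Z.1, by
    have := finrank_map_mkQ_add_finrank (le_comap_mkQ J Z.1)
    rw [map_comap_eq_of_surjective (mkQ_surjective J)] at this
    omega⟩
  left_inv X := Subtype.ext ((comap_map_mkQ J X.1).trans (sup_eq_right.2 X.2.1))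
  right_inv Z := Subtype.ext (map_comap_eq_of_surjective (mkQ_surjective J) Z.1)

def equivSubmoduleOfLe {I A : Submodule F V} (hIA : I ≤ A) (m : ℕ) :
    {X : Submodule F V // I ≤ X ∧ X ≤ A ∧ finrank F X = m} ≃
      {X : Submodule F A // I.comap A.subtype ≤ X ∧ finrank F X = m} where
  toFun X := ⟨X.1.comap A.subtype, comap_mono X.2.1,
    (comapSubtypeEquivOfLe X.2.2.1).finrank_eq.trans X.2.2.2⟩
  invFun X := ⟨X.1.map A.subtype, by
      have := map_mono (f := A.subtype) X.2.1
      rwa [map_comap_subtype, inf_eq_right.2 hIA] at this,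
    map_subtype_le A X.1, (finrank_map_subtype_eq A X.1).trans X.2.2⟩
  left_inv X := Subtype.ext ((map_comap_subtype A X.1).trans (inf_eq_right.2 X.2.2.1))
  right_inv X := Subtype.ext (comap_map_eq_of_injective (injective_subtype A) X.1)

lemma card_interval_finrank_eq [Fintype F] {I A : Submodule F V} (hIA : I ≤ A) (k : ℕ) :
    Nat.card {X : Submodule F V // I ≤ X ∧ X ≤ A ∧ finrank F X = finrank F I + k} =
      gauss (Fintype.card F) (finrank F A - finrank F I) k := by
  set J := I.comap A.subtype
  have hJ : finrank F J = finrank F I := (comapSubtypeEquivOfLe hIA).finrank_eq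
  have : Finite (A ⧸ J) := Module.finite_of_finite F
  rw [Nat.card_congr (equivSubmoduleOfLe hIA _), ← hJ, Nat.card_congr (equivQuotientOfLe J k),
    card_finrank_eq, ← finrank_quotient_add_finrank J, Nat.add_sub_cancel]

end Intervals

section ModularLattice

variable {α : Type*} [Lattice α] [IsModularLattice α] {a b x y : α}

lemma inf_sup_eq_left_of_inf_le (hx : a ⊓ b ≤ x) (hxa : x ≤ a) (hyb : y ≤ b) :
    a ⊓ (x ⊔ y) = x := by
  rw [inf_comm, sup_inf_assoc_of_le y hxa]
  exact sup_eq_left.2 ((le_inf inf_le_right (inf_le_left.trans hyb)).trans hx)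

lemma inf_sup_eq_right_of_inf_le (hy : a ⊓ b ≤ y) (hyb : y ≤ b) (hxa : x ≤ a) :
    b ⊓ (x ⊔ y) = y := by
  rw [sup_comm]
  exact inf_sup_eq_left_of_inf_le (inf_comm b a ▸ hy) hyb hxa

end ModularLattice

section Geodesics

variable {F V : Type*} [Field F] [AddCommGroup V] [Module F V] [FiniteDimensional F V]

/-- `dim (A ⊓ C) + dim (B ⊓ C) ≤ dim C + dim (A ⊓ B)` always holds, since
`A ⊓ C ⊔ B ⊓ C ≤ C` and `A ⊓ C ⊓ (B ⊓ C) ≤ A ⊓ B`; equality forces both to be equalities. -/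
lemma inf_le_and_sup_inf_eq_of_finrank_add_le {A B C : Submodule F V}
    (h : finrank F C + finrank F ↥(A ⊓ B) ≤ finrank F ↥(A ⊓ C) + finrank F ↥(B ⊓ C)) :
    A ⊓ B ≤ C ∧ A ⊓ C ⊔ B ⊓ C = C := by
  have hsum := finrank_sup_add_finrank_inf_eq (A ⊓ C) (B ⊓ C)
  have hP : A ⊓ C ⊔ B ⊓ C ≤ C := sup_le inf_le_right inf_le_right
  have hQ : A ⊓ C ⊓ (B ⊓ C) ≤ A ⊓ B := inf_le_inf inf_le_left inf_le_left
  have hPC := finrank_mono hP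
  have hQAB := finrank_mono hQ
  have hQ_eq : A ⊓ C ⊓ (B ⊓ C) = A ⊓ B := eq_of_le_of_finrank_le hQ (by omega)
  exact ⟨hQ_eq ▸ inf_le_right.trans inf_le_right, eq_of_le_of_finrank_le hP (by omega)⟩

lemma finrank_sup_add_finrank_inf_of_le {A B X Y : Submodule F V} (hX : A ⊓ B ≤ X) (hXA : X ≤ A)
    (hY : A ⊓ B ≤ Y) (hYB : Y ≤ B) :
    finrank F ↥(X ⊔ Y) + finrank F ↥(A ⊓ B) = finrank F X + finrank F Y := by
  rw [← le_antisymm (inf_le_inf hXA hYB) (le_inf hX hY)]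
  exact finrank_sup_add_finrank_inf_eq X Y

def equivIntervalProd (A B : Submodule F V) (i j : ℕ) :
    {C : Submodule F V // finrank F C = finrank F ↥(A ⊓ B) + i + j ∧
        finrank F ↥(A ⊓ C) = finrank F ↥(A ⊓ B) + i ∧
        finrank F ↥(B ⊓ C) = finrank F ↥(A ⊓ B) + j} ≃
      {X : Submodule F V // A ⊓ B ≤ X ∧ X ≤ A ∧ finrank F X = finrank F ↥(A ⊓ B) + i} ×
        {Y : Submodule F V // A ⊓ B ≤ Y ∧ Y ≤ B ∧ finrank F Y = finrank F ↥(A ⊓ B) + j} where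
  toFun C :=
    have hC : A ⊓ B ≤ C.1 :=
      (inf_le_and_sup_inf_eq_of_finrank_add_le (by obtain ⟨h₁, h₂, h₃⟩ := C.2; omega)).1
    (⟨A ⊓ C, le_inf inf_le_left hC, inf_le_left, C.2.2.1⟩,
      ⟨B ⊓ C, le_inf inf_le_right hC, inf_le_left, C.2.2.2⟩)
  invFun := fun ⟨⟨X, hX, hXA, hXdim⟩, ⟨Y, hY, hYB, hYdim⟩⟩ =>
    ⟨X ⊔ Y, by have := finrank_sup_add_finrank_inf_of_le hX hXA hY hYB; omega,
      by rw [inf_sup_eq_left_of_inf_le hX hXA hYB, hXdim],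
      by rw [inf_sup_eq_right_of_inf_le hY hYB hXA, hYdim]⟩
  left_inv C := Subtype.ext
    (inf_le_and_sup_inf_eq_of_finrank_add_le (by obtain ⟨h₁, h₂, h₃⟩ := C.2; omega)).2
  right_inv := fun ⟨⟨X, hX, hXA, _⟩, ⟨Y, hY, hYB, _⟩⟩ =>
    Prod.ext (Subtype.ext (inf_sup_eq_left_of_inf_le hX hXA hYB))
      (Subtype.ext (inf_sup_eq_right_of_inf_le hY hYB hXA))

lemma card_finrank_inf_eq [Fintype F] (A B : Submodule F V) (i j : ℕ) :
    Nat.card {C : Submodule F V // finrank F C = finrank F ↥(A ⊓ B) + i + j ∧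
        finrank F ↥(A ⊓ C) = finrank F ↥(A ⊓ B) + i ∧
        finrank F ↥(B ⊓ C) = finrank F ↥(A ⊓ B) + j} =
      gauss (Fintype.card F) (finrank F A - finrank F ↥(A ⊓ B)) i *
        gauss (Fintype.card F) (finrank F B - finrank F ↥(A ⊓ B)) j := by
  rw [Nat.card_congr (equivIntervalProd A B i j), Nat.card_prod,
    card_interval_finrank_eq inf_le_left, card_interval_finrank_eq inf_le_right]

end Geodesics

section SubspaceDistance

variable {F : Type} [Field F] {n : ℕ}

lemma dS_eq_iff {U W : Submodule F (Fin n → F)} {k : ℕ} :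
    dS U W = k ↔ finrank F U + finrank F W = k + 2 * finrank F ↥(U ⊓ W) := by
  have hsum := finrank_sup_add_finrank_inf_eq U W
  have hle := finrank_mono (inf_le_sup : U ⊓ W ≤ U ⊔ W)
  rw [dS]
  omega

lemma dS_le_dim (U W : Submodule F (Fin n → F)) : dS U W ≤ n :=
  (Nat.sub_le _ _).trans ((finrank_le _).trans_eq (finrank_fin_fun F))

/-- Writing `d = dim (A ⊓ B)`, the arguments of the two Gaussian binomials are
`dim A - d`, `dim (A ⊓ C) - d`, `dim B - d` and `dim (B ⊓ C) - d`. -/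
lemma card_dS_eq_gaussQ_mul [Fintype F] (A B : Submodule F (Fin n → F)) {c u s : ℕ}
    (hAB : dS A B = u + s) :
    Nat.card {C : Submodule F (Fin n → F) // finrank F C = c ∧ dS A C = u ∧ dS B C = s} =
      gaussQ (Fintype.card F) (((finrank F A : ℚ) - finrank F B + u + s) / 2)
          (((c : ℚ) - finrank F B + s) / 2) *
        gaussQ (Fintype.card F) (((finrank F B : ℚ) - finrank F A + u + s) / 2)
          (((c : ℚ) - finrank F A + u) / 2) := by
  set a := finrank F A
  set b := finrank F B
  set d := finrank F ↥(A ⊓ B)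
  have hd : a + b = u + s + 2 * d := dS_eq_iff.1 hAB
  have hdq : (a : ℚ) + b = u + s + 2 * d := by exact_mod_cast hd
  by_cases hij : ∃ i j : ℕ, c + s = b + 2 * i ∧ c + u = a + 2 * j
  · obtain ⟨i, j, hi, hj⟩ := hij
    have hiq : (c : ℚ) + s = b + 2 * i := by exact_mod_cast hi
    have hjq : (c : ℚ) + u = a + 2 * j := by exact_mod_cast hj
    have hda : d ≤ a := finrank_mono inf_le_left
    have hdb : d ≤ b := finrank_mono inf_le_right
    have hC : ∀ C : Submodule F (Fin n → F), (finrank F C = c ∧ dS A C = u ∧ dS B C = s) ↔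
        (finrank F C = d + i + j ∧ finrank F ↥(A ⊓ C) = d + i ∧ finrank F ↥(B ⊓ C) = d + j) := by
      intro C
      rw [dS_eq_iff, dS_eq_iff]
      omega
    rw [Nat.card_congr (Equiv.subtypeEquivRight hC), card_finrank_inf_eq,
      show ((a : ℚ) - b + u + s) / 2 = ((a - d : ℕ) : ℚ) by push_cast [hda]; linarith,
      show ((b : ℚ) - a + u + s) / 2 = ((b - d : ℕ) : ℚ) by push_cast [hdb]; linarith,
      show ((c : ℚ) - b + s) / 2 = i by linarith, show ((c : ℚ) - a + u) / 2 = j by linarith,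
      gaussQ_natCast, gaussQ_natCast]
  · have hempty : Nat.card {C : Submodule F (Fin n → F) //
        finrank F C = c ∧ dS A C = u ∧ dS B C = s} = 0 := by
      refine Nat.card_eq_zero.2 (Or.inl ⟨fun ⟨C, hc, hu, hs⟩ => hij ?_⟩)
      have hAC : finrank F ↥(A ⊓ C) ≤ c := hc ▸ finrank_mono inf_le_right
      have hBC : finrank F ↥(B ⊓ C) ≤ c := hc ▸ finrank_mono inf_le_right
      rw [dS_eq_iff] at hu hs
      exact ⟨finrank F ↥(A ⊓ C) - d, finrank F ↥(B ⊓ C) - d, by omega, by omega⟩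
    rw [hempty, eq_comm, mul_eq_zero]
    by_contra! hne
    obtain ⟨i, hi⟩ := exists_eq_natCast_of_gaussQ_ne_zero hne.1
    obtain ⟨j, hj⟩ := exists_eq_natCast_of_gaussQ_ne_zero hne.2
    exact hij ⟨i, j, by exact_mod_cast (by linarith : (c : ℚ) + s = b + 2 * i),
      by exact_mod_cast (by linarith : (c : ℚ) + u = a + 2 * j)⟩

end SubspaceDistance

theorem stmt16 (F : Type) [Field F] [Fintype F] (n a b c u s : ℕ)
    (A B : Submodule F (Fin n → F))
    (hA : Module.finrank F ↥A = a) (hB : Module.finrank F ↥B = b)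
    (hAB : dS A B = u + s) :
    ((u : ℤ) ≤ min ((a : ℤ) + c) ((a : ℤ) + 2 * b - c) ∧
     (s : ℤ) ≤ min ((b : ℤ) + c) (2 * (a : ℤ) + b - c) ∧
     (u : ℤ) + s ≤ min ((a : ℤ) + b) (n : ℤ) →
      Nat.card {C : Submodule F (Fin n → F) //
          Module.finrank F ↥C = c ∧ dS A C = u ∧ dS B C = s} =
        gaussQ (Fintype.card F) (((a : ℚ) - b + u + s) / 2) (((c : ℚ) - b + s) / 2) *
          gaussQ (Fintype.card F) (((b : ℚ) - a + u + s) / 2) (((c : ℚ) - a + u) / 2)) ∧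
    (¬((u : ℤ) ≤ min ((a : ℤ) + c) ((a : ℤ) + 2 * b - c) ∧
       (s : ℤ) ≤ min ((b : ℤ) + c) (2 * (a : ℤ) + b - c) ∧
       (u : ℤ) + s ≤ min ((a : ℤ) + b) (n : ℤ)) →
      Nat.card {C : Submodule F (Fin n → F) //
        Module.finrank F ↥C = c ∧ dS A C = u ∧ dS B C = s} = 0) := by
  subst hA hB
  refine ⟨fun _ => card_dS_eq_gaussQ_mul A B hAB, fun hfail => ?_⟩
  refine Nat.card_eq_zero.2 (Or.inl ⟨fun ⟨C, hc, hu, hs⟩ => hfail ?_⟩)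
  have hd := dS_eq_iff.1 hAB
  have hn := dS_le_dim A B
  have hAC : finrank F ↥(A ⊓ C) ≤ finrank F A := finrank_mono inf_le_left
  have hBC : finrank F ↥(B ⊓ C) ≤ finrank F B := finrank_mono inf_le_left
  rw [dS_eq_iff] at hu hs
  simp only [le_min_iff]
  omega
end
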